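/- arXiv:1708.04446 — 6 statements merged into one kernel-verified Lean document; each statement's English description precedes it below -/
import Mathlib

section
/- Let φ ∈ 𝓜 and ε, δ > 0. Define ψ(t) := t^{ε/(ε+δ)} φ(t^{1/(ε+δ)}) for t ≥ 1 and ψ(t) := φ(1) for 0 < t < 1. Then ψ is pseudoconcave in a neighborhood of +∞; that is, there exist b > 1 and a concave function ψ₁ : (b,∞) → (0,∞) such that both ψ/ψ₁ and ψ₁/ψ are bounded on (b,∞). -/
/-
Write `ψ t = exp (ε u + ℓ u)` with `u = log t / (ε + δ)` and `ℓ u = log (φ (exp u))`. Slow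
variation of `φ` says `ℓ (u + v) - ℓ u → 0` for each fixed `v`; since `ℓ` is measurable, the
Csiszár–Erdős measure argument makes this locally uniform, whence
`|ℓ v - ℓ u| ≤ η (v - u + 1)` for large `u ≤ v`. With `η = min ε δ`, this makes `ψ`
quasi-increasing and `ψ t / t` quasi-decreasing on a ray, and every positive function with these
two properties is equivalent to the concave lower envelope of the lines `t ↦ f s (1 + t / s)`.
-/

open Filter

/-- The class `𝓜`. -/
def MClass (φ : ℝ → ℝ) : Prop :=
  Measurable φ ∧ (∀ t, 1 ≤ t → 0 < φ t) ∧
  (∀ b : ℝ, 1 < b → ∃ C > 0, ∀ t ∈ Set.Icc (1:ℝ) b, φ t ≤ C ∧ C⁻¹ ≤ φ t) ∧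
  (∀ l : ℝ, 0 < l → Tendsto (fun t => φ (l * t) / φ t) atTop (nhds 1))

open Real Set MeasureTheory Topology

theorem tendsto_measure_inter_setOf_forall_abs_lt {α : Type*} [MeasurableSpace α] (μ : Measure α)
    {g : ℕ → α → ℝ} (hg : ∀ x, Tendsto (g · x) atTop (𝓝 0)) {r : ℝ} (hr : 0 < r) (S : Set α) :
    Tendsto (fun n => μ (S ∩ {x | ∀ m ≥ n, |g m x| < r})) atTop (𝓝 (μ S)) := by
  have hmono : Monotone fun n => S ∩ {x | ∀ m ≥ n, |g m x| < r} :=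
    fun n n' hn x hx => ⟨hx.1, fun m hm => hx.2 m (hn.trans hm)⟩
  have hunion : ⋃ n, S ∩ {x | ∀ m ≥ n, |g m x| < r} = S := by
    refine subset_antisymm (iUnion_subset fun n => inter_subset_left) fun x hx => ?_
    obtain ⟨n, hn⟩ := eventually_atTop.1 ((hg x).abs.eventually_lt_const (by simpa using hr))
    exact mem_iUnion.2 ⟨n, hx, hn⟩
  have := tendsto_measure_iUnion_atTop (μ := μ) hmono
  rwa [hunion] at this

theorem exists_forall_Icc_abs_sub_le_of_tendsto_sub {h : ℝ → ℝ} (hm : Measurable h)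
    (hlim : ∀ u, Tendsto (fun s => h (s + u) - h s) atTop (𝓝 0)) {ε : ℝ} (hε : 0 < ε) :
    ∃ s₀, ∀ s ≥ s₀, ∀ u ∈ Icc (0 : ℝ) 1, |h (s + u) - h s| ≤ ε := by
  by_contra! hbad
  choose S hS U hU hgt using fun n : ℕ => hbad n
  have hS_top : Tendsto S atTop atTop := tendsto_atTop_mono hS tendsto_natCast_atTop_atTop
  have hSU_top : Tendsto (fun n => S n + U n) atTop atTop :=
    tendsto_atTop_mono (fun n => le_add_of_nonneg_right (hU n).1) hS_top
  set A : ℕ → Set ℝ := fun n => Icc 0 2 ∩ {x | ∀ m ≥ n, |h (S m + x) - h (S m)| < ε / 2}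
  set B : ℕ → Set ℝ := fun n =>
    Icc 0 1 ∩ {y | ∀ m ≥ n, |h (S m + U m + y) - h (S m + U m)| < ε / 2}
  have hA : Tendsto (fun n => volume (A n)) atTop (𝓝 (volume (Icc (0 : ℝ) 2))) :=
    tendsto_measure_inter_setOf_forall_abs_lt volume
      (g := fun m x => h (S m + x) - h (S m)) (fun x => (hlim x).comp hS_top) (half_pos hε) _
  have hB : Tendsto (fun n => volume (B n)) atTop (𝓝 (volume (Icc (0 : ℝ) 1))) :=
    tendsto_measure_inter_setOf_forall_abs_lt volume
      (g := fun m y => h (S m + U m + y) - h (S m + U m)) (fun y => (hlim y).comp hSU_top)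
      (half_pos hε) _
  have hvol : volume (Icc (0 : ℝ) 2) < volume (Icc (0 : ℝ) 2) + volume (Icc (0 : ℝ) 1) := by
    norm_num [Real.volume_Icc]
  obtain ⟨n, hn⟩ := ((hA.add hB).eventually_const_lt hvol).exists
  -- `A n` and the translate `U n + B n` are too large to be disjoint subsets of `[0, 2]`.
  obtain ⟨x, hxA, hxB⟩ := nonempty_inter_of_measure_lt_add volume (s := A n) (u := Icc 0 2)
    (t := (fun x => -U n + x) ⁻¹' B n) (by measurability) inter_subset_left
    (fun x hx => ⟨by linarith [hx.1.1, (hU n).1], by linarith [hx.1.2, (hU n).2]⟩)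
    (by rwa [measure_preimage_add])
  have h₁ : |h (S n + x) - h (S n)| < ε / 2 := hxA.2 n le_rfl
  have h₂ : |h (S n + x) - h (S n + U n)| < ε / 2 := by
    simpa only [add_neg_cancel_left, add_assoc] using hxB.2 n le_rfl
  have := abs_sub_le (h (S n + U n)) (h (S n + x)) (h (S n))
  rw [abs_sub_comm (h (S n + U n)) (h (S n + x))] at this
  linarith [hgt n]

theorem abs_sub_le_mul_sub_add_one_of_forall_Icc {h : ℝ → ℝ} {s₀ ε : ℝ}
    (H : ∀ s ≥ s₀, ∀ u ∈ Icc (0 : ℝ) 1, |h (s + u) - h s| ≤ ε) {s t : ℝ} (hs : s₀ ≤ s)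
    (hst : s ≤ t) : |h t - h s| ≤ ε * (t - s + 1) := by
  have hε : 0 ≤ ε := by simpa using H s₀ le_rfl 0 (by simp)
  have hstep : ∀ n : ℕ, ∀ s ≥ s₀, ∀ u ∈ Icc (0 : ℝ) (n + 1), |h (s + u) - h s| ≤ ε * (n + 1) := by
    intro n
    induction n with
    | zero => simpa using H
    | succ n ih =>
      intro s hs u hu
      push_cast at hu ⊢
      rcases le_total u 1 with hu₁ | hu₁
      · calc |h (s + u) - h s| ≤ ε := H s hs u ⟨hu.1, hu₁⟩
          _ ≤ ε * (n + 1 + 1) := le_mul_of_one_le_right hε (by linarith [n.cast_nonneg (α := ℝ)])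
      · have h₁ := H s hs 1 ⟨zero_le_one, le_rfl⟩
        have h₂ := ih (s + 1) (by linarith) (u - 1) ⟨by linarith, by linarith [hu.2]⟩
        rw [add_add_sub_cancel] at h₂
        calc |h (s + u) - h s| ≤ |h (s + u) - h (s + 1)| + |h (s + 1) - h s| := abs_sub_le _ _ _
          _ ≤ ε * (n + 1 + 1) := by linarith
  have hfloor := Nat.lt_floor_add_one (t - s)
  calc |h t - h s| = |h (s + (t - s)) - h s| := by rw [add_sub_cancel]
    _ ≤ ε * (⌊t - s⌋₊ + 1) := hstep _ s hs (t - s) ⟨by linarith, hfloor.le⟩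
    _ ≤ ε * (t - s + 1) := by gcongr; exact Nat.floor_le (by linarith)

theorem MClass.exists_abs_log_sub_le {φ : ℝ → ℝ} (hφ : MClass φ) {η : ℝ} (hη : 0 < η) :
    ∃ σ₀, ∀ σ τ, σ₀ ≤ σ → σ ≤ τ →
      |log (φ (exp τ)) - log (φ (exp σ))| ≤ η * (τ - σ + 1) := by
  obtain ⟨hm, hpos, -, hlim⟩ := hφ
  have hlog : ∀ u, Tendsto (fun σ => log (φ (exp (σ + u))) - log (φ (exp σ))) atTop (𝓝 0) := by
    intro u
    have := (continuousAt_log one_ne_zero).tendsto.comp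
      ((hlim _ (exp_pos u)).comp tendsto_exp_atTop)
    rw [log_one] at this
    refine this.congr' ?_
    filter_upwards [eventually_ge_atTop (max 0 (-u))] with σ hσ
    have h₁ : 1 ≤ exp σ := one_le_exp (le_of_max_le_left hσ)
    have h₂ : 1 ≤ exp u * exp σ := by
      rw [← exp_add]; exact one_le_exp (by linarith [le_of_max_le_right hσ])
    rw [Function.comp_apply, Function.comp_apply, log_div (hpos _ h₂).ne' (hpos _ h₁).ne',
      exp_add, mul_comm]
  obtain ⟨σ₀, hσ₀⟩ := exists_forall_Icc_abs_sub_le_of_tendsto_sub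
    (measurable_log.comp (hm.comp measurable_exp)) hlog hη
  exact ⟨σ₀, fun σ τ hσ hστ => abs_sub_le_mul_sub_add_one_of_forall_Icc hσ₀ hσ hστ⟩

theorem ConcaveOn.ciInf {ι E : Type*} [Nonempty ι] [AddCommGroup E] [Module ℝ E] {s : Set E}
    {f : ι → E → ℝ} (hf : ∀ i, ConcaveOn ℝ s (f i))
    (hbdd : ∀ x ∈ s, BddBelow (range fun i => f i x)) :
    ConcaveOn ℝ s fun x => ⨅ i, f i x := by
  refine ⟨(hf (Classical.arbitrary ι)).1, fun x hx y hy a b ha hb hab => le_ciInf fun i => ?_⟩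
  calc a • (⨅ i, f i x) + b • ⨅ i, f i y ≤ a • f i x + b • f i y := by
        gcongr
        exacts [ciInf_le (hbdd x hx) i, ciInf_le (hbdd y hy) i]
    _ ≤ f i (a • x + b • y) := (hf i).2 hx hy ha hb hab

def PseudoconcaveOn (ψ : ℝ → ℝ) (s : Set ℝ) : Prop :=
  ∃ ψ₁ : ℝ → ℝ, ConcaveOn ℝ s ψ₁ ∧ (∀ t ∈ s, 0 < ψ₁ t) ∧
    ∃ C : ℝ, 0 < C ∧ ∀ t ∈ s, ψ t ≤ C * ψ₁ t ∧ ψ₁ t ≤ C * ψ t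

theorem pseudoconcaveOn_Ioi_of_quasiMonotone {f : ℝ → ℝ} {b C : ℝ} (hb : 0 ≤ b)
    (hf : ∀ t ∈ Ioi b, 0 < f t) (hmono : ∀ s ∈ Ioi b, ∀ t, s ≤ t → f s ≤ C * f t)
    (hanti : ∀ s ∈ Ioi b, ∀ t, s ≤ t → f t / t ≤ C * (f s / s)) :
    PseudoconcaveOn f (Ioi b) := by
  have hC : 0 < C := by
    have hb₁ : b + 1 ∈ Ioi b := by simp
    exact pos_of_mul_pos_left ((hf _ hb₁).trans_le (hmono _ hb₁ _ le_rfl)) (hf _ hb₁).le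
  set line : Ioi b → ℝ → ℝ := fun s t => f s + f s / s * t
  have hline_nonneg : ∀ s : Ioi b, ∀ t ∈ Ioi b, 0 ≤ f s ∧ 0 ≤ f s / s * t := fun s t ht => by
    have := hf s s.2
    have : 0 < (s : ℝ) := hb.trans_lt s.2
    have : 0 < t := hb.trans_lt ht
    constructor <;> positivity
  have hbdd : ∀ t ∈ Ioi b, BddBelow (range fun s => line s t) := fun t ht =>
    ⟨0, forall_mem_range.2 fun s => add_nonneg (hline_nonneg s t ht).1 (hline_nonneg s t ht).2⟩
  have hlower : ∀ t ∈ Ioi b, f t / C ≤ ⨅ s, line s t := by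
    intro t ht
    refine le_ciInf fun s => (div_le_iff₀' hC).2 ?_
    obtain ⟨hfs, hslope⟩ := hline_nonneg s t ht
    rcases le_total (s : ℝ) t with hst | hts
    · have := hanti s s.2 t hst
      rw [div_le_iff₀ (hb.trans_lt ht)] at this
      nlinarith
    · nlinarith [hmono t ht s hts]
  have hupper : ∀ t ∈ Ioi b, ⨅ s, line s t ≤ 2 * f t := fun t ht =>
    (ciInf_le (hbdd t ht) ⟨t, ht⟩).trans_eq (by
      simp only [line]; field_simp [(hb.trans_lt ht).ne']; ring)
  refine ⟨fun t => ⨅ s, line s t, ConcaveOn.ciInf (fun s => ?_) hbdd, fun t ht => ?_, max C 2,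
    by positivity, fun t ht => ⟨?_, ?_⟩⟩
  · exact ⟨convex_Ioi b, fun x _ y _ a c _ _ hac => le_of_eq (by
      simp only [line, smul_eq_mul]; linear_combination (f s) * hac)⟩
  · exact (div_pos (hf t ht) hC).trans_le (hlower t ht)
  · calc f t ≤ C * ⨅ s, line s t := (div_le_iff₀' hC).1 (hlower t ht)
      _ ≤ max C 2 * ⨅ s, line s t := by
        gcongr
        · exact (div_pos (hf t ht) hC).le.trans (hlower t ht)
        · exact le_max_left _ _
  · exact (hupper t ht).trans (by gcongr; exacts [(hf t ht).le, le_max_right _ _])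

theorem pseudoconcaveOn_Ioi_of_abs_sub_le {ε δ σ₀ b : ℝ} (hεδ : 0 < ε + δ) {ℓ ψ : ℝ → ℝ}
    (hℓ : ∀ u v, σ₀ ≤ u → u ≤ v → |ℓ v - ℓ u| ≤ min ε δ * (v - u + 1))
    (hb : exp ((ε + δ) * σ₀) ≤ b)
    (hψ : ∀ t ∈ Ioi b, ψ t = exp (ε * (log t / (ε + δ)) + ℓ (log t / (ε + δ)))) :
    PseudoconcaveOn ψ (Ioi b) := by
  have hb₀ : 0 < b := (exp_pos _).trans_le hb
  have hlog : ∀ s ∈ Ioi b, ∀ t, s ≤ t →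
      σ₀ ≤ log s / (ε + δ) ∧ log s / (ε + δ) ≤ log t / (ε + δ) := by
    intro s hs t hst
    have hs₀ : 0 < s := hb₀.trans hs
    refine ⟨(le_div_iff₀' hεδ).2 ?_, by gcongr⟩
    exact (le_log_iff_exp_le hs₀).2 (hb.trans hs.le)
  have hquot : ∀ t ∈ Ioi b, ψ t / t = exp (ℓ (log t / (ε + δ)) - δ * (log t / (ε + δ))) := by
    intro t ht
    have ht_exp : t = exp ((ε + δ) * (log t / (ε + δ))) := by
      rw [mul_div_cancel₀ _ hεδ.ne', exp_log (hb₀.trans ht)]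
    calc ψ t / t = exp (ε * (log t / (ε + δ)) + ℓ (log t / (ε + δ))) /
          exp ((ε + δ) * (log t / (ε + δ))) := by rw [hψ t ht, ← ht_exp]
      _ = exp (ℓ (log t / (ε + δ)) - δ * (log t / (ε + δ))) := by rw [← exp_sub]; ring_nf
  refine pseudoconcaveOn_Ioi_of_quasiMonotone (C := exp (min ε δ)) hb₀.le
    (fun t ht => hψ t ht ▸ exp_pos _) (fun s hs t hst => ?_) (fun s hs t hst => ?_)
  · obtain ⟨hσ₀, huv⟩ := hlog s hs t hst
    rw [hψ s hs, hψ t (hs.trans_le hst), ← exp_add, exp_le_exp]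
    have := abs_le.1 (hℓ _ _ hσ₀ huv)
    nlinarith [min_le_left ε δ]
  · obtain ⟨hσ₀, huv⟩ := hlog s hs t hst
    rw [hquot s hs, hquot t (hs.trans_le hst), ← exp_add, exp_le_exp]
    have := abs_le.1 (hℓ _ _ hσ₀ huv)
    nlinarith [min_le_right ε δ]

theorem interpolation_parameter_pseudoconcave_general (φ : ℝ → ℝ) (hφ : MClass φ)
    (ε δ : ℝ) (hε : 0 < ε) (hδ : 0 < δ)
    (ψ : ℝ → ℝ)
    (hψ₁ : ∀ t : ℝ, 1 ≤ t → ψ t = t ^ (ε / (ε + δ)) * φ (t ^ (1 / (ε + δ)))) :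
    ∃ b : ℝ, 1 < b ∧ ∃ ψ₁ : ℝ → ℝ,
      ConcaveOn ℝ (Set.Ioi b) ψ₁ ∧ (∀ t ∈ Set.Ioi b, 0 < ψ₁ t) ∧
      ∃ C : ℝ, 0 < C ∧ ∀ t ∈ Set.Ioi b, ψ t ≤ C * ψ₁ t ∧ ψ₁ t ≤ C * ψ t := by
  have hεδ : 0 < ε + δ := add_pos hε hδ
  obtain ⟨σ₀, hσ₀⟩ := hφ.exists_abs_log_sub_le (lt_min hε hδ)
  refine ⟨max 2 (exp ((ε + δ) * σ₀)), one_lt_two.trans_le (le_max_left _ _),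
    pseudoconcaveOn_Ioi_of_abs_sub_le hεδ hσ₀ (le_max_right _ _) fun t ht => ?_⟩
  have ht₁ : 1 ≤ t := by linarith [le_max_left 2 (exp ((ε + δ) * σ₀)), mem_Ioi.1 ht]
  have hu : 0 ≤ log t / (ε + δ) := div_nonneg (log_nonneg ht₁) hεδ.le
  rw [hψ₁ t ht₁, exp_add, exp_log (hφ.2.1 _ (one_le_exp hu)), rpow_def_of_pos (by linarith),
    rpow_def_of_pos (by linarith)]
  ring_nf

/-- `ψ(t) = t^{ε/(ε+δ)} φ(t^{1/(ε+δ)})` for `t ≥ 1` and `ψ(t) = φ(1)` for `0 < t < 1`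
is pseudoconcave in a neighborhood of `+∞`: it is equivalent there to a concave
positive function. -/
theorem interpolation_parameter_pseudoconcave (φ : ℝ → ℝ) (hφ : MClass φ)
    (ε δ : ℝ) (hε : 0 < ε) (hδ : 0 < δ)
    (ψ : ℝ → ℝ)
    (hψ₁ : ∀ t : ℝ, 1 ≤ t → ψ t = t ^ (ε / (ε + δ)) * φ (t ^ (1 / (ε + δ))))
    (hψ₂ : ∀ t : ℝ, 0 < t → t < 1 → ψ t = φ 1) :
    ∃ b : ℝ, 1 < b ∧ ∃ ψ₁ : ℝ → ℝ,
      ConcaveOn ℝ (Set.Ioi b) ψ₁ ∧ (∀ t ∈ Set.Ioi b, 0 < ψ₁ t) ∧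
      ∃ C : ℝ, 0 < C ∧ ∀ t ∈ Set.Ioi b, ψ t ≤ C * ψ₁ t ∧ ψ₁ t ≤ C * ψ t :=
  interpolation_parameter_pseudoconcave_general φ hφ ε δ hε hδ ψ hψ₁
end

section
/- Let X₀, X₁, Y₀, Y₁ be separable complex Hilbert spaces with X₁ ⊂ X₀ and Y₁ ⊂ Y₀ continuously and densely embedded. Let T : X₀ → Y₀ be a bounded linear operator whose restriction to X₁ is a bounded operator T : X₁ → Y₁. Suppose T : X₀ → Y₀ and T : X₁ → Y₁ are both Fredholm, with the same kernel N ⊂ X₁ and the same index. Then the range of T : X₁ → Y₁ equals Y₁ ∩ T(X₀). -/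
/-!
Since `i` maps `ker T₁` isomorphically onto `ker T`, equality of the indices says that the two
cokernels have the same dimension. A bounded operator between Banach spaces with
finite-codimensional range has closed range, so `range T + j(Y₁)` is a closed subspace containing
the dense subspace `j(Y₁)`, i.e. all of `Y₀`. Hence `j` induces a surjection
`Y₁ / range T₁ → Y₀ / range T` between spaces of equal finite dimension; its injectivity says
`range T₁ = j⁻¹(range T)`.
-/

open Module Submodule LinearMap

theorem Submodule.comap_eq_of_sup_range_eq_top_of_finrank_quotient_eq {K V W : Type*} [Field K]
    [AddCommGroup V] [Module K V] [AddCommGroup W] [Module K W]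
    {p : Submodule K V} {q : Submodule K W} {f : V →ₗ[K] W}
    [FiniteDimensional K (V ⧸ p)] [FiniteDimensional K (W ⧸ q)]
    (hpq : p ≤ q.comap f) (hsup : q ⊔ range f = ⊤)
    (hrank : finrank K (V ⧸ p) = finrank K (W ⧸ q)) :
    q.comap f = p := by
  have hsurj : Function.Surjective (p.mapQ q f hpq) := by
    rwa [← range_eq_top, range_mapQ, map_mkQ_eq_top]
  have hker := ker_eq_bot.2 ((injective_iff_surjective_of_finrank_eq_finrank hrank).2 hsurj)
  rw [ker_mapQ, ← le_ker_iff_map, ker_mkQ] at hker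
  exact le_antisymm hker hpq

theorem ContinuousLinearMap.isClosed_range_of_finiteDimensional_quotient {𝕜 E F : Type*}
    [NontriviallyNormedField 𝕜] [CompleteSpace 𝕜]
    [NormedAddCommGroup E] [NormedSpace 𝕜 E] [CompleteSpace E]
    [NormedAddCommGroup F] [NormedSpace 𝕜 F] [CompleteSpace F]
    (f : E →L[𝕜] F) [FiniteDimensional 𝕜 (F ⧸ f.range)] :
    IsClosed (f.range : Set F) := by
  have : IsClosed (f.ker : Set E) := f.isClosed_ker
  let g : (E ⧸ f.ker) →L[𝕜] F := f.ker.liftQL f le_rfl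
  have hrange : g.range = f.range := range_liftQ _ _ _
  have hker : g.ker = ⊥ := ker_liftQ_eq_bot _ _ _ le_rfl
  obtain ⟨G, hG⟩ := f.range.exists_isCompl
  have : FiniteDimensional 𝕜 G := .of_fg <| Submodule.CoFG.fg_of_isCompl hG inferInstance
  rw [← hrange] at hG ⊢
  exact g.closed_complemented_range_of_isCompl_of_ker_eq_bot G hG G.closed_of_finiteDimensional hker

theorem Submodule.sup_eq_top_of_dense_of_finiteDimensional_quotient {𝕜 F : Type*}
    [NontriviallyNormedField 𝕜] [CompleteSpace 𝕜] [NormedAddCommGroup F] [NormedSpace 𝕜 F]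
    {R V : Submodule 𝕜 F} [FiniteDimensional 𝕜 (F ⧸ R)]
    (hR : IsClosed (R : Set F)) (hV : Dense (V : Set F)) : R ⊔ V = ⊤ := by
  have hclosed := isClosed_mono_of_finiteDimensional_quotient hR (le_sup_left (b := V))
  have hdense : Dense ((R ⊔ V : Submodule 𝕜 F) : Set F) :=
    hV.mono (SetLike.coe_mono le_sup_right)
  exact SetLike.coe_injective (hclosed.closure_eq.symm.trans hdense.closure_eq)

theorem fredholm_restriction_range_general
    (X₀ X₁ Y₀ Y₁ : Type*)
    [NormedAddCommGroup X₀] [InnerProductSpace ℂ X₀] [CompleteSpace X₀]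
    [NormedAddCommGroup X₁] [InnerProductSpace ℂ X₁]
    [NormedAddCommGroup Y₀] [InnerProductSpace ℂ Y₀] [CompleteSpace Y₀]
    [NormedAddCommGroup Y₁] [InnerProductSpace ℂ Y₁]
    (i : X₁ →L[ℂ] X₀) (hi : Function.Injective i)
    (j : Y₁ →L[ℂ] Y₀) (hjd : DenseRange j)
    (T : X₀ →L[ℂ] Y₀) (T₁ : X₁ →L[ℂ] Y₁)
    (hcomp : ∀ x : X₁, j (T₁ x) = T (i x))
    -- both operators are Fredholm:
    (hcoker₀ : FiniteDimensional ℂ (Y₀ ⧸ LinearMap.range (T : X₀ →ₗ[ℂ] Y₀)))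
    (hcoker₁ : FiniteDimensional ℂ (Y₁ ⧸ LinearMap.range (T₁ : X₁ →ₗ[ℂ] Y₁)))
    -- the kernels coincide (as subsets of `X₁`):
    (hker_eq : ∀ x : X₀, x ∈ LinearMap.ker (T : X₀ →ₗ[ℂ] Y₀) ↔ ∃ x₁ ∈ LinearMap.ker (T₁ : X₁ →ₗ[ℂ] Y₁), i x₁ = x)
    -- the indices coincide:
    (hindex :
      (Module.finrank ℂ (LinearMap.ker (T : X₀ →ₗ[ℂ] Y₀)) : ℤ) -
          Module.finrank ℂ (Y₀ ⧸ LinearMap.range (T : X₀ →ₗ[ℂ] Y₀)) =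
        (Module.finrank ℂ (LinearMap.ker (T₁ : X₁ →ₗ[ℂ] Y₁)) : ℤ) -
          Module.finrank ℂ (Y₁ ⧸ LinearMap.range (T₁ : X₁ →ₗ[ℂ] Y₁))) :
    ∀ y₁ : Y₁, (∃ x₁ : X₁, T₁ x₁ = y₁) ↔ ∃ x₀ : X₀, T x₀ = j y₁ := by
  have hker_map : T₁.ker.map (i : X₁ →ₗ[ℂ] X₀) = T.ker := by
    ext x
    exact (hker_eq x).symm
  have hker_rank : finrank ℂ T₁.ker = finrank ℂ T.ker :=
    hker_map ▸ (Submodule.equivMapOfInjective _ hi _).finrank_eq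
  have hcoker_rank : finrank ℂ (Y₁ ⧸ T₁.range) = finrank ℂ (Y₀ ⧸ T.range) := by omega
  have hsup : T.range ⊔ j.range = ⊤ :=
    sup_eq_top_of_dense_of_finiteDimensional_quotient
      T.isClosed_range_of_finiteDimensional_quotient hjd
  have hle : T₁.range ≤ T.range.comap (j : Y₁ →ₗ[ℂ] Y₀) := by
    rintro _ ⟨x, rfl⟩
    exact ⟨i x, (hcomp x).symm⟩
  have hrange := comap_eq_of_sup_range_eq_top_of_finrank_quotient_eq hle hsup hcoker_rank
  exact fun y₁ ↦ (SetLike.ext_iff.1 hrange y₁).symm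

/-- Interpolation-type statement on Fredholm operators: if a bounded operator
`T : X₀ → Y₀` restricts to a bounded operator `T₁ : X₁ → Y₁` (with `X₁ ⊂ X₀`,
`Y₁ ⊂ Y₀` continuously and densely embedded), both operators are Fredholm with the
same kernel (contained in `X₁`) and the same index, then the range of `T₁` equals
`Y₁ ∩ T(X₀)`. -/
theorem fredholm_restriction_range
    (X₀ X₁ Y₀ Y₁ : Type*)
    [NormedAddCommGroup X₀] [InnerProductSpace ℂ X₀] [CompleteSpace X₀]
    [TopologicalSpace.SeparableSpace X₀]
    [NormedAddCommGroup X₁] [InnerProductSpace ℂ X₁] [CompleteSpace X₁]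
    [TopologicalSpace.SeparableSpace X₁]
    [NormedAddCommGroup Y₀] [InnerProductSpace ℂ Y₀] [CompleteSpace Y₀]
    [TopologicalSpace.SeparableSpace Y₀]
    [NormedAddCommGroup Y₁] [InnerProductSpace ℂ Y₁] [CompleteSpace Y₁]
    [TopologicalSpace.SeparableSpace Y₁]
    (i : X₁ →L[ℂ] X₀) (hi : Function.Injective i) (hid : DenseRange i)
    (j : Y₁ →L[ℂ] Y₀) (hj : Function.Injective j) (hjd : DenseRange j)
    (T : X₀ →L[ℂ] Y₀) (T₁ : X₁ →L[ℂ] Y₁)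
    (hcomp : ∀ x : X₁, j (T₁ x) = T (i x))
    -- both operators are Fredholm:
    (hker₀ : FiniteDimensional ℂ (LinearMap.ker (T : X₀ →ₗ[ℂ] Y₀)))
    (hcoker₀ : FiniteDimensional ℂ (Y₀ ⧸ LinearMap.range (T : X₀ →ₗ[ℂ] Y₀)))
    (hker₁ : FiniteDimensional ℂ (LinearMap.ker (T₁ : X₁ →ₗ[ℂ] Y₁)))
    (hcoker₁ : FiniteDimensional ℂ (Y₁ ⧸ LinearMap.range (T₁ : X₁ →ₗ[ℂ] Y₁)))
    -- the kernels coincide (as subsets of `X₁`):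
    (hker_eq : ∀ x : X₀, x ∈ LinearMap.ker (T : X₀ →ₗ[ℂ] Y₀) ↔ ∃ x₁ ∈ LinearMap.ker (T₁ : X₁ →ₗ[ℂ] Y₁), i x₁ = x)
    -- the indices coincide:
    (hindex :
      (Module.finrank ℂ (LinearMap.ker (T : X₀ →ₗ[ℂ] Y₀)) : ℤ) -
          Module.finrank ℂ (Y₀ ⧸ LinearMap.range (T : X₀ →ₗ[ℂ] Y₀)) =
        (Module.finrank ℂ (LinearMap.ker (T₁ : X₁ →ₗ[ℂ] Y₁)) : ℤ) -
          Module.finrank ℂ (Y₁ ⧸ LinearMap.range (T₁ : X₁ →ₗ[ℂ] Y₁))) :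
    ∀ y₁ : Y₁, (∃ x₁ : X₁, T₁ x₁ = y₁) ↔ ∃ x₀ : X₀, T x₀ = j y₁ :=
  fredholm_restriction_range_general X₀ X₁ Y₀ Y₁ i hi j hjd T T₁ hcomp hcoker₀ hcoker₁ hker_eq
    hindex
end

section
/- (Peetre's lemma setting.) Let E₁, E₂, E₃ be Banach spaces, A : E₁ → E₂ a bounded linear operator with finite-dimensional kernel and closed range, and suppose the embedding E₁ ↪ E₃ is compact. Then there exists c > 0 such that ‖u‖_{E₁} ≤ c(‖Au‖_{E₂} + ‖u‖_{E₃}) for all u ∈ E₁. -/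
/-!
Pick, by the open mapping theorem applied to `A` onto its closed range, a preimage `x` of `A u`
with `‖x‖ ≤ C₁ ‖A u‖`. The rest `u - x` lies in the finite-dimensional kernel of `A`, on which
the injective map `K` is bounded below: `‖u - x‖ ≤ C₂ ‖K (u - x)‖ ≤ C₂ (‖K u‖ + ‖K‖ ‖x‖)`.
-/

section

variable {𝕜 E F G : Type*} [NontriviallyNormedField 𝕜]
  [NormedAddCommGroup E] [NormedSpace 𝕜 E]
  [NormedAddCommGroup F] [NormedSpace 𝕜 F]
  [NormedAddCommGroup G] [NormedSpace 𝕜 G]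

theorem ContinuousLinearMap.exists_preimage_norm_le_of_isClosed_range
    [CompleteSpace E] [CompleteSpace F] (A : E →L[𝕜] F) (hA : IsClosed (Set.range A)) :
    ∃ C > 0, ∀ u, ∃ x, A x = A u ∧ ‖x‖ ≤ C * ‖A u‖ := by
  have : CompleteSpace A.range := hA.completeSpace_coe
  obtain ⟨C, hC, hpre⟩ := (A.codRestrict A.range A.mem_range_self).exists_preimage_norm_le
    fun ⟨_, u, rfl⟩ ↦ ⟨u, rfl⟩
  refine ⟨C, hC, fun u ↦ ?_⟩
  obtain ⟨x, hx, hnorm⟩ := hpre ⟨A u, A.mem_range_self u⟩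
  exact ⟨x, congrArg Subtype.val hx, hnorm⟩

theorem LinearMap.exists_norm_le_mul_norm_of_injOn [CompleteSpace 𝕜] (K : E →ₗ[𝕜] G)
    {V : Submodule 𝕜 E} [FiniteDimensional 𝕜 V] (hK : Set.InjOn K V) :
    ∃ C > 0, ∀ v ∈ V, ‖v‖ ≤ C * ‖K v‖ := by
  have hinj : LinearMap.ker (K ∘ₗ V.subtype) = ⊥ :=
    LinearMap.ker_eq_bot.2 fun v w h ↦ Subtype.ext (hK v.2 w.2 h)
  obtain ⟨C, hC, hanti⟩ := (K ∘ₗ V.subtype).exists_antilipschitzWith hinj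
  exact ⟨C, hC, fun v hv ↦ hanti.le_mul_norm (map_zero _) ⟨v, hv⟩⟩

theorem ContinuousLinearMap.exists_norm_le_mul_add_of_finiteDimensional_ker
    [CompleteSpace 𝕜] [CompleteSpace E] [CompleteSpace F] (A : E →L[𝕜] F) (K : E →L[𝕜] G)
    [FiniteDimensional 𝕜 (LinearMap.ker (A : E →ₗ[𝕜] F))] (hA : IsClosed (Set.range A))
    (hK : Set.InjOn K (LinearMap.ker (A : E →ₗ[𝕜] F))) :
    ∃ c > 0, ∀ u, ‖u‖ ≤ c * (‖A u‖ + ‖K u‖) := by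
  obtain ⟨C₁, hC₁, hpre⟩ := A.exists_preimage_norm_le_of_isClosed_range hA
  obtain ⟨C₂, hC₂, hker⟩ := (K : E →ₗ[𝕜] G).exists_norm_le_mul_norm_of_injOn hK
  refine ⟨C₁ + C₂ + C₂ * ‖K‖ * C₁, by positivity, fun u ↦ ?_⟩
  obtain ⟨x, hx, hx_norm⟩ := hpre u
  have hker_norm : ‖u - x‖ ≤ C₂ * (‖K u‖ + ‖K‖ * ‖x‖) := calc
    ‖u - x‖ ≤ C₂ * ‖K (u - x)‖ := hker _ (by simp [hx])
    _ ≤ C₂ * (‖K u‖ + ‖K‖ * ‖x‖) := by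
      grw [map_sub, norm_sub_le, K.le_opNorm x]
  calc ‖u‖ ≤ ‖x‖ + ‖u - x‖ := norm_le_insert' u x
    _ ≤ C₁ * ‖A u‖ + C₂ * (‖K u‖ + ‖K‖ * (C₁ * ‖A u‖)) := by grw [hker_norm, hx_norm]
    _ ≤ (C₁ + C₂ + C₂ * ‖K‖ * C₁) * (‖A u‖ + ‖K u‖) := by
      have hCK : 0 ≤ C₂ * ‖K‖ * C₁ := by positivity
      nlinarith [norm_nonneg (A u), norm_nonneg (K u)]

end

theorem peetre_lemma_general
    (E₁ E₂ E₃ : Type*)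
    [NormedAddCommGroup E₁] [NormedSpace ℂ E₁] [CompleteSpace E₁]
    [NormedAddCommGroup E₂] [NormedSpace ℂ E₂] [CompleteSpace E₂]
    [NormedAddCommGroup E₃] [NormedSpace ℂ E₃]
    (A : E₁ →L[ℂ] E₂)
    (hker : FiniteDimensional ℂ (LinearMap.ker (A : E₁ →ₗ[ℂ] E₂)))
    (hrange : IsClosed (Set.range A))
    (K : E₁ →L[ℂ] E₃) (hKinj : Function.Injective K) :
    ∃ c : ℝ, 0 < c ∧ ∀ u : E₁, ‖u‖ ≤ c * (‖A u‖ + ‖K u‖) :=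
  A.exists_norm_le_mul_add_of_finiteDimensional_ker K hrange hKinj.injOn

/-- Peetre's lemma: if `A : E₁ → E₂` is a bounded operator with finite-dimensional kernel
and closed range, and `K : E₁ → E₃` is a compact (injective) embedding, then
`‖u‖ ≤ c(‖Au‖ + ‖Ku‖)` for all `u`. -/
theorem peetre_lemma
    (E₁ E₂ E₃ : Type*)
    [NormedAddCommGroup E₁] [NormedSpace ℂ E₁] [CompleteSpace E₁]
    [NormedAddCommGroup E₂] [NormedSpace ℂ E₂] [CompleteSpace E₂]
    [NormedAddCommGroup E₃] [NormedSpace ℂ E₃] [CompleteSpace E₃]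
    (A : E₁ →L[ℂ] E₂)
    (hker : FiniteDimensional ℂ (LinearMap.ker (A : E₁ →ₗ[ℂ] E₂)))
    (hrange : IsClosed (Set.range A))
    (K : E₁ →L[ℂ] E₃) (hKinj : Function.Injective K) (hKcpt : IsCompactOperator K) :
    ∃ c : ℝ, 0 < c ∧ ∀ u : E₁, ‖u‖ ≤ c * (‖A u‖ + ‖K u‖) :=
  peetre_lemma_general E₁ E₂ E₃ A hker hrange K hKinj
end

section
/- Let q ≥ 0 be an integer and φ ∈ 𝓜 satisfy ∫₁^∞ dt/(t φ²(t)) < ∞. Then the Hörmander space H^{q+n/2,φ}(ℝⁿ) embeds continuously into C^q_b(ℝⁿ): every w ∈ H^{q+n/2,φ}(ℝⁿ) is (after modification on a null set) q times continuously differentiable with all partial derivatives up to order q bounded, and ‖w‖_{C^q_b} ≤ c‖w‖_{q+n/2,φ} for a constant c independent of w. -/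
open Filter MeasureTheory ENNReal
open scoped FourierTransform

/-- The Hörmander weight `⟨ξ⟩^{2s} φ(⟨ξ⟩)²`. -/
noncomputable def hWeight {n : ℕ} (s : ℝ) (φ : ℝ → ℝ) (ξ : EuclideanSpace ℝ (Fin n)) : ℝ :=
  (1 + ‖ξ‖ ^ 2) ^ s * (φ (Real.sqrt (1 + ‖ξ‖ ^ 2))) ^ 2

/-- The square of the `H^{s,φ}` norm of a distribution with Fourier transform `W`. -/
noncomputable def hInt (n : ℕ) (s : ℝ) (φ : ℝ → ℝ) (W : EuclideanSpace ℝ (Fin n) → ℂ) :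
    ℝ≥0∞ :=
  ∫⁻ ξ, ENNReal.ofReal (hWeight s φ ξ * ‖W ξ‖ ^ 2)

/-!
Differentiating the Fourier inversion integral under the integral sign, which is legitimate as
soon as `‖ξ‖ ^ j W(ξ)` is integrable for `j ≤ q`, gives `‖D^j w‖ ≤ (2π)^j ∫ ‖ξ‖^j |W(ξ)| dξ`.
By Cauchy–Schwarz, `∫ ⟨ξ⟩^q |W| ≤ ‖w‖_{q+n/2,φ} (∫ ⟨ξ⟩^{-n} φ(⟨ξ⟩)^{-2} dξ)^{1/2}`, and in polar
coordinates followed by the substitution `t = ⟨r⟩ = √(1 + r²)` this last integral is controlled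
by `∫₁^∞ dt / (t φ(t)²)`.
-/

open Set Real

section Radial

variable {ψ : ℝ → ℝ}

lemma pow_pred_div_sqrt_one_add_sq_pow_le {n : ℕ} (hn : 1 ≤ n) {r : ℝ} (hr : 1 ≤ r) :
    r ^ (n - 1) / √(1 + r ^ 2) ^ n ≤ 2 * (r / √(1 + r ^ 2)) / √(1 + r ^ 2) := by
  set s := √(1 + r ^ 2)
  have hs0 : 0 < s := by positivity
  have hs_sq : s ^ 2 = 1 + r ^ 2 := sq_sqrt (by positivity)
  have hrs : r ≤ s := le_sqrt_of_sq_le (by linarith)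
  have hs2r : s ≤ 2 * r := (sqrt_le_left (by linarith)).2 (by nlinarith)
  calc r ^ (n - 1) / s ^ n ≤ s ^ (n - 1) / s ^ n := by gcongr
    _ = 1 / s := by
      rw [← Nat.sub_add_cancel hn, pow_succ, Nat.add_sub_cancel]
      field_simp
    _ ≤ 2 * (r / s) / s := by
      rw [div_le_div_iff_of_pos_right hs0, mul_div_assoc', le_div_iff₀ hs0]
      linarith

lemma integrableOn_Ioc_radial_sqrt (n : ℕ) (hψ : Measurable ψ)
    (hbdd : ∃ C, ∀ t ∈ Icc (1 : ℝ) 2, |ψ t| ≤ C) :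
    IntegrableOn (fun r ↦ r ^ (n - 1) * (ψ √(1 + r ^ 2) / √(1 + r ^ 2) ^ n)) (Ioc 0 1) := by
  obtain ⟨C, hC⟩ := hbdd
  refine Measure.integrableOn_of_bounded (M := C) measure_Ioc_lt_top.ne (by fun_prop) ?_
  refine (ae_restrict_iff' measurableSet_Ioc).2 (ae_of_all _ fun r ⟨hr0, hr1⟩ ↦ ?_)
  have hs1 : 1 ≤ √(1 + r ^ 2) := one_le_sqrt.2 (by nlinarith)
  have hs2 : √(1 + r ^ 2) ≤ 2 := (sqrt_le_left zero_le_two).2 (by nlinarith)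
  simp only [norm_mul, norm_div, norm_pow, Real.norm_eq_abs, abs_of_pos hr0,
    abs_of_pos (lt_of_lt_of_le one_pos hs1)]
  calc r ^ (n - 1) * (|ψ √(1 + r ^ 2)| / √(1 + r ^ 2) ^ n)
      ≤ 1 * (|ψ √(1 + r ^ 2)| / 1) := by
        gcongr
        · exact pow_le_one₀ hr0.le hr1
        · exact one_le_pow₀ hs1
    _ ≤ C := by simpa using hC _ ⟨hs1, hs2⟩

lemma integrableOn_Ioi_radial_sqrt {n : ℕ} (hn : 1 ≤ n) (hψ : Measurable ψ)
    (hψ_int : IntegrableOn (fun t ↦ ψ t / t) (Ioi 1)) :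
    IntegrableOn (fun r ↦ r ^ (n - 1) * (ψ √(1 + r ^ 2) / √(1 + r ^ 2) ^ n)) (Ioi 1) := by
  have hderiv : ∀ r ∈ Ioi (1 : ℝ),
      HasDerivWithinAt (fun r ↦ √(1 + r ^ 2)) (r / √(1 + r ^ 2)) (Ioi 1) r := by
    intro r _
    have := ((hasDerivAt_pow 2 r).const_add 1).sqrt (by positivity)
    refine (this.congr_deriv ?_).hasDerivWithinAt
    field_simp
    norm_num
  have hinj : InjOn (fun r ↦ √(1 + r ^ 2)) (Ioi 1) := by
    intro a ha b hb hab
    have := congrArg (· ^ 2) hab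
    rw [sq_sqrt (by positivity), sq_sqrt (by positivity)] at this
    nlinarith [mem_Ioi.1 ha, mem_Ioi.1 hb]
  have himage : (fun r ↦ √(1 + r ^ 2)) '' Ioi 1 ⊆ Ioi 1 := by
    rintro _ ⟨r, hr, rfl⟩
    exact lt_sqrt_of_sq_lt (by nlinarith [mem_Ioi.1 hr])
  have hsubst := (integrableOn_image_iff_integrableOn_abs_deriv_smul measurableSet_Ioi hderiv
    hinj _).1 (hψ_int.mono_set himage)
  refine (hsubst.norm.const_mul 2).mono' (by fun_prop) ?_
  refine (ae_restrict_iff' measurableSet_Ioi).2 (ae_of_all _ fun r hr ↦ ?_)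
  have hr : 1 ≤ r := (mem_Ioi.1 hr).le
  have hs0 : 0 < √(1 + r ^ 2) := by positivity
  simp only [norm_mul, norm_div, norm_smul, norm_pow, Real.norm_eq_abs, abs_div,
    abs_of_pos (by linarith : (0 : ℝ) < r), abs_of_pos hs0]
  calc r ^ (n - 1) * (|ψ √(1 + r ^ 2)| / √(1 + r ^ 2) ^ n)
      = r ^ (n - 1) / √(1 + r ^ 2) ^ n * |ψ √(1 + r ^ 2)| := by ring
    _ ≤ 2 * (r / √(1 + r ^ 2)) / √(1 + r ^ 2) * |ψ √(1 + r ^ 2)| :=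
        mul_le_mul_of_nonneg_right (pow_pred_div_sqrt_one_add_sq_pow_le hn hr) (abs_nonneg _)
    _ = 2 * (r / √(1 + r ^ 2) * (|ψ √(1 + r ^ 2)| / √(1 + r ^ 2))) := by ring

/-- For `n = 1` the integrand does not vanish at `r = 0`, while the Jacobian `r / √(1 + r²)` of
the substitution `t = √(1 + r²)` does; hence the split at `r = 1`. -/
lemma integrableOn_Ioi_zero_radial_sqrt {n : ℕ} (hn : 1 ≤ n) (hψ : Measurable ψ)
    (hbdd : ∃ C, ∀ t ∈ Icc (1 : ℝ) 2, |ψ t| ≤ C)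
    (hψ_int : IntegrableOn (fun t ↦ ψ t / t) (Ioi 1)) :
    IntegrableOn (fun r ↦ r ^ (n - 1) * (ψ √(1 + r ^ 2) / √(1 + r ^ 2) ^ n)) (Ioi 0) := by
  rw [← Ioc_union_Ioi_eq_Ioi zero_le_one]
  exact (integrableOn_Ioc_radial_sqrt n hψ hbdd).union (integrableOn_Ioi_radial_sqrt hn hψ hψ_int)

lemma integrable_radial_sqrt {E : Type*} [NormedAddCommGroup E] [NormedSpace ℝ E]
    [FiniteDimensional ℝ E] [Nontrivial E] [MeasurableSpace E] [BorelSpace E]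
    (μ : Measure E) [μ.IsAddHaarMeasure] (hψ : Measurable ψ)
    (hbdd : ∃ C, ∀ t ∈ Icc (1 : ℝ) 2, |ψ t| ≤ C)
    (hψ_int : IntegrableOn (fun t ↦ ψ t / t) (Ioi 1)) :
    Integrable (fun x ↦ ψ √(1 + ‖x‖ ^ 2) / √(1 + ‖x‖ ^ 2) ^ Module.finrank ℝ E) μ := by
  rw [integrable_fun_norm_addHaar μ (f := fun r ↦ ψ √(1 + r ^ 2) / √(1 + r ^ 2) ^ _)]
  exact integrableOn_Ioi_zero_radial_sqrt Module.finrank_pos hψ hbdd hψ_int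

end Radial

lemma one_add_sq_rpow_natCast_div_two (x : ℝ) (m : ℕ) :
    (1 + x ^ 2) ^ ((m : ℝ) / 2) = √(1 + x ^ 2) ^ m := by
  rw [sqrt_eq_rpow, ← Real.rpow_mul_natCast (by positivity), one_div_mul_eq_div]

lemma hWeight_natCast_div_two {n : ℕ} (m : ℕ) (φ : ℝ → ℝ) (ξ : EuclideanSpace ℝ (Fin n)) :
    hWeight ((m : ℝ) / 2) φ ξ = √(1 + ‖ξ‖ ^ 2) ^ m * φ √(1 + ‖ξ‖ ^ 2) ^ 2 := by
  rw [hWeight, one_add_sq_rpow_natCast_div_two]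

lemma integrable_inv_hWeight {n : ℕ} (hn : 1 ≤ n) {φ : ℝ → ℝ} (hφ : Measurable φ)
    (hlow : ∃ c > 0, ∀ t ∈ Icc (1 : ℝ) 2, c ≤ φ t)
    (hint : ∫⁻ t in Ioi (1 : ℝ), ENNReal.ofReal (1 / (t * φ t ^ 2)) < ⊤) :
    Integrable (fun ξ : EuclideanSpace ℝ (Fin n) ↦ (hWeight ((n : ℝ) / 2) φ ξ)⁻¹) := by
  have : Nontrivial (EuclideanSpace ℝ (Fin n)) :=
    Module.nontrivial_of_finrank_pos (R := ℝ) (by rwa [finrank_euclideanSpace_fin])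
  obtain ⟨c, hc, hcφ⟩ := hlow
  have hbdd : ∃ C, ∀ t ∈ Icc (1 : ℝ) 2, |(φ t ^ 2)⁻¹| ≤ C := by
    refine ⟨(c ^ 2)⁻¹, fun t ht ↦ ?_⟩
    rw [abs_of_nonneg (by positivity)]
    gcongr
    exact hcφ t ht
  have hψ_int : IntegrableOn (fun t ↦ (φ t ^ 2)⁻¹ / t) (Ioi 1) := by
    have h_eq (t : ℝ) : (φ t ^ 2)⁻¹ / t = 1 / (t * φ t ^ 2) := by
      rw [div_eq_mul_inv, one_div, mul_inv, mul_comm]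
    refine ⟨(by fun_prop : Measurable _).aestronglyMeasurable,
      (hasFiniteIntegral_iff_ofReal ?_).2 (by simpa only [h_eq] using hint)⟩
    exact (ae_restrict_iff' measurableSet_Ioi).2 (ae_of_all _ fun t (ht : 1 < t) ↦
      div_nonneg (by positivity) (by linarith))
  convert integrable_radial_sqrt (E := EuclideanSpace ℝ (Fin n)) volume (by fun_prop) hbdd
    hψ_int using 2 with ξ
  rw [hWeight_natCast_div_two, finrank_euclideanSpace_fin, mul_inv, div_eq_mul_inv, mul_comm]

lemma memLp_two_of_lintegral_sq_lt_top {α : Type*} [MeasurableSpace α] {μ : Measure α}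
    {f : α → ℝ} (hf : AEStronglyMeasurable f μ) (hF : ∫⁻ x, ENNReal.ofReal (f x ^ 2) ∂μ < ⊤) :
    MemLp f 2 μ :=
  (memLp_two_iff_integrable_sq hf).2
    ⟨hf.pow 2, (hasFiniteIntegral_iff_ofReal (ae_of_all _ fun x ↦ sq_nonneg (f x))).2 hF⟩

lemma integral_mul_le_sqrt_lintegral_sq_mul_sqrt_lintegral_sq {α : Type*} [MeasurableSpace α]
    {μ : Measure α} {f g : α → ℝ} (hf : AEStronglyMeasurable f μ)
    (hg : AEStronglyMeasurable g μ) (hf0 : 0 ≤ f) (hg0 : 0 ≤ g)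
    (hF : ∫⁻ x, ENNReal.ofReal (f x ^ 2) ∂μ < ⊤) (hG : ∫⁻ x, ENNReal.ofReal (g x ^ 2) ∂μ < ⊤) :
    Integrable (f * g) μ ∧ ∫ x, f x * g x ∂μ ≤
      √(∫⁻ x, ENNReal.ofReal (f x ^ 2) ∂μ).toReal *
        √(∫⁻ x, ENNReal.ofReal (g x ^ 2) ∂μ).toReal := by
  have hfL := memLp_two_of_lintegral_sq_lt_top hf hF
  have hgL := memLp_two_of_lintegral_sq_lt_top hg hG
  have h_sqrt {h : α → ℝ} (hh : AEStronglyMeasurable h μ) :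
      (∫ x, h x ^ (2 : ℝ) ∂μ) ^ (1 / (2 : ℝ)) = √(∫⁻ x, ENNReal.ofReal (h x ^ 2) ∂μ).toReal := by
    simp_rw [Real.rpow_two, ← sqrt_eq_rpow]
    rw [integral_eq_lintegral_of_nonneg_ae (ae_of_all _ fun x ↦ sq_nonneg (h x)) (hh.pow 2)]
  refine ⟨hfL.integrable_mul hgL, ?_⟩
  have := integral_mul_le_Lp_mul_Lq_of_nonneg Real.HolderConjugate.two_two (ae_of_all _ hf0)
    (ae_of_all _ hg0) (by simpa using hfL) (by simpa using hgL)
  rwa [h_sqrt hf, h_sqrt hg] at this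

lemma hWeight_add {n : ℕ} (a s : ℝ) (φ : ℝ → ℝ) (ξ : EuclideanSpace ℝ (Fin n)) :
    hWeight (a + s) φ ξ = (1 + ‖ξ‖ ^ 2) ^ a * hWeight s φ ξ := by
  rw [hWeight, hWeight, Real.rpow_add (by positivity), mul_assoc]

lemma hWeight_nonneg {n : ℕ} (s : ℝ) (φ : ℝ → ℝ) (ξ : EuclideanSpace ℝ (Fin n)) :
    0 ≤ hWeight s φ ξ := by
  unfold hWeight
  positivity

lemma measurable_hWeight {n : ℕ} (s : ℝ) {φ : ℝ → ℝ} (hφ : Measurable φ) :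
    Measurable (hWeight (n := n) s φ) := by
  unfold hWeight
  fun_prop

lemma norm_pow_mul_le_sqrt_hWeight_mul_sqrt_inv_hWeight {n j q : ℕ} (hj : j ≤ q) (s : ℝ)
    {φ : ℝ → ℝ} {ξ : EuclideanSpace ℝ (Fin n)} (hφ : φ √(1 + ‖ξ‖ ^ 2) ≠ 0) {a : ℝ} (ha : 0 ≤ a) :
    ‖ξ‖ ^ j * a ≤ √(hWeight ((q : ℝ) + s) φ ξ * a ^ 2) * √(hWeight s φ ξ)⁻¹ := by
  have hw : 0 < hWeight s φ ξ := by
    unfold hWeight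
    positivity
  have h_pow : (‖ξ‖ ^ j) ^ 2 ≤ (1 + ‖ξ‖ ^ 2) ^ q :=
    calc (‖ξ‖ ^ j) ^ 2 = (‖ξ‖ ^ 2) ^ j := by ring
      _ ≤ (1 + ‖ξ‖ ^ 2) ^ j := by gcongr; linarith
      _ ≤ (1 + ‖ξ‖ ^ 2) ^ q := pow_le_pow_right₀ (by linarith [sq_nonneg ‖ξ‖]) hj
  calc ‖ξ‖ ^ j * a ≤ √((1 + ‖ξ‖ ^ 2) ^ q) * a := by gcongr; exact le_sqrt_of_sq_le h_pow
    _ = √((1 + ‖ξ‖ ^ 2) ^ q * a ^ 2) := by rw [sqrt_mul (by positivity), sqrt_sq ha]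
    _ = √(hWeight ((q : ℝ) + s) φ ξ * a ^ 2) * √(hWeight s φ ξ)⁻¹ := by
      rw [← sqrt_mul (mul_nonneg (hWeight_nonneg _ _ _) (sq_nonneg a)), hWeight_add,
        Real.rpow_natCast]
      field_simp

lemma integrable_norm_pow_mul_norm_and_integral_le {n j q : ℕ} (hj : j ≤ q) (s : ℝ)
    {φ : ℝ → ℝ} (hφ : Measurable φ) (hφ_pos : ∀ t, 1 ≤ t → 0 < φ t)
    {W : EuclideanSpace ℝ (Fin n) → ℂ} (hW : Measurable W) (hA : hInt n ((q : ℝ) + s) φ W < ⊤)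
    (hK : ∫⁻ ξ : EuclideanSpace ℝ (Fin n), ENNReal.ofReal (hWeight s φ ξ)⁻¹ < ⊤) :
    Integrable (fun ξ ↦ ‖ξ‖ ^ j * ‖W ξ‖) ∧ ∫ ξ, ‖ξ‖ ^ j * ‖W ξ‖ ≤
      √(hInt n ((q : ℝ) + s) φ W).toReal *
        √(∫⁻ ξ : EuclideanSpace ℝ (Fin n), ENNReal.ofReal (hWeight s φ ξ)⁻¹).toReal := by
  set f := fun ξ ↦ √(hWeight ((q : ℝ) + s) φ ξ * ‖W ξ‖ ^ 2)
  set g := fun ξ : EuclideanSpace ℝ (Fin n) ↦ √(hWeight s φ ξ)⁻¹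
  have hf_sq (ξ) : f ξ ^ 2 = hWeight ((q : ℝ) + s) φ ξ * ‖W ξ‖ ^ 2 :=
    sq_sqrt (mul_nonneg (hWeight_nonneg _ _ _) (sq_nonneg _))
  have hg_sq (ξ) : g ξ ^ 2 = (hWeight s φ ξ)⁻¹ := sq_sqrt (inv_nonneg.2 (hWeight_nonneg _ _ _))
  obtain ⟨hfg, hbound⟩ :=
    integral_mul_le_sqrt_lintegral_sq_mul_sqrt_lintegral_sq (f := f) (g := g)
    (((measurable_hWeight _ hφ).mul (hW.norm.pow_const 2)).sqrt.aestronglyMeasurable)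
    ((measurable_hWeight _ hφ).inv.sqrt.aestronglyMeasurable) (fun _ ↦ sqrt_nonneg _)
    (fun _ ↦ sqrt_nonneg _) (by simpa only [hf_sq, hInt] using hA) (by simpa only [hg_sq] using hK)
  have h_le (ξ) : ‖ξ‖ ^ j * ‖W ξ‖ ≤ f ξ * g ξ :=
    norm_pow_mul_le_sqrt_hWeight_mul_sqrt_inv_hWeight hj s
      (hφ_pos _ (one_le_sqrt.2 (by nlinarith [sq_nonneg ‖ξ‖]))).ne' (norm_nonneg _)
  have h_int : Integrable (fun ξ ↦ ‖ξ‖ ^ j * ‖W ξ‖) :=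
    hfg.mono' (by fun_prop) (ae_of_all _ fun ξ ↦ by
      rw [Real.norm_of_nonneg (by positivity)]; exact h_le ξ)
  refine ⟨h_int, (integral_mono h_int hfg h_le).trans ?_⟩
  simpa only [hf_sq, hg_sq, hInt, Pi.mul_apply] using hbound

section Fourier

variable {V E : Type*} [NormedAddCommGroup V] [InnerProductSpace ℝ V] [FiniteDimensional ℝ V]
  [MeasurableSpace V] [BorelSpace V] [NormedAddCommGroup E] [NormedSpace ℂ E] {f : V → E} {N : ℕ∞}

lemma norm_iteratedFDeriv_fourier_le
    (hf : ∀ k : ℕ, k ≤ N → Integrable (fun v ↦ ‖v‖ ^ k * ‖f v‖))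
    (h'f : AEStronglyMeasurable f) {j : ℕ} (hj : j ≤ N) (x : V) :
    ‖iteratedFDeriv ℝ j (𝓕 f) x‖ ≤ (2 * π) ^ j * ∫ v, ‖v‖ ^ j * ‖f v‖ := by
  rw [Real.iteratedFDeriv_fourier hf h'f hj, ← integral_const_mul]
  refine (VectorFourier.norm_fourierIntegral_le_integral_norm _ _ _ _ _).trans
    (integral_mono_of_nonneg (ae_of_all _ fun _ ↦ norm_nonneg _) ((hf j hj).const_mul _)
      (ae_of_all _ fun v ↦ ?_))
  calc ‖VectorFourier.fourierPowSMulRight (innerSL ℝ) f v j‖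
      ≤ (2 * π * ‖innerSL (E := V) ℝ‖) ^ j * ‖v‖ ^ j * ‖f v‖ :=
        VectorFourier.norm_fourierPowSMulRight_le _ _ _ _
    _ ≤ (2 * π * 1) ^ j * ‖v‖ ^ j * ‖f v‖ := by gcongr; exact norm_innerSL_le ℝ
    _ = (2 * π) ^ j * (‖v‖ ^ j * ‖f v‖) := by ring

lemma contDiff_fourierInv (hf : ∀ k : ℕ, k ≤ N → Integrable (fun v ↦ ‖v‖ ^ k * ‖f v‖)) :
    ContDiff ℝ N (𝓕⁻ f) := by
  rw [funext (Real.fourierInv_eq_fourier_neg f)]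
  exact (Real.contDiff_fourier hf).comp contDiff_neg

lemma norm_iteratedFDeriv_fourierInv_le
    (hf : ∀ k : ℕ, k ≤ N → Integrable (fun v ↦ ‖v‖ ^ k * ‖f v‖))
    (h'f : AEStronglyMeasurable f) {j : ℕ} (hj : j ≤ N) (x : V) :
    ‖iteratedFDeriv ℝ j (𝓕⁻ f) x‖ ≤ (2 * π) ^ j * ∫ v, ‖v‖ ^ j * ‖f v‖ := by
  have : 𝓕⁻ f = 𝓕 f ∘ LinearIsometryEquiv.neg ℝ := funext (Real.fourierInv_eq_fourier_neg f)
  rw [this, LinearIsometryEquiv.norm_iteratedFDeriv_comp_right]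
  exact norm_iteratedFDeriv_fourier_le hf h'f hj _

end Fourier

/-- `W` stands for the Fourier transform of `w ∈ H^{q+n/2,φ}`, which is recovered as `𝓕⁻ W`. -/
theorem hormander_embedding_into_Cq (n : ℕ) (hn : 1 ≤ n) (q : ℕ) (φ : ℝ → ℝ)
    (hφ : MClass φ)
    (hint : (∫⁻ t in Set.Ioi (1:ℝ), ENNReal.ofReal (1 / (t * (φ t) ^ 2))) < ⊤) :
    ∃ c : ℝ, 0 < c ∧
      ∀ W : EuclideanSpace ℝ (Fin n) → ℂ, Measurable W →
        hInt n ((q : ℝ) + n / 2) φ W < ⊤ →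
        ContDiff ℝ (q : ℕ∞) (𝓕⁻ W) ∧
        ∀ j : ℕ, j ≤ q → ∀ x : EuclideanSpace ℝ (Fin n),
          ‖iteratedFDeriv ℝ j (𝓕⁻ W) x‖ ≤
            c * Real.sqrt (hInt n ((q : ℝ) + n / 2) φ W).toReal := by
  obtain ⟨hφ_meas, hφ_pos, hφ_loc, -⟩ := hφ
  obtain ⟨C, hC, hCφ⟩ := hφ_loc 2 one_lt_two
  set K := ∫⁻ ξ : EuclideanSpace ℝ (Fin n), ENNReal.ofReal (hWeight ((n : ℝ) / 2) φ ξ)⁻¹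
  have hK : K < ⊤ := (integrable_inv_hWeight hn hφ_meas
    ⟨C⁻¹, inv_pos.2 hC, fun t ht ↦ (hCφ t ht).2⟩ hint).lintegral_lt_top
  refine ⟨(2 * π) ^ q * √K.toReal + 1, by positivity, fun W hW hA ↦ ?_⟩
  have hmoment (j : ℕ) (hj : j ≤ q) := integrable_norm_pow_mul_norm_and_integral_le hj _
    hφ_meas hφ_pos hW hA hK
  have hmoment_int : ∀ k : ℕ, (k : ℕ∞) ≤ q → Integrable (fun v ↦ ‖v‖ ^ k * ‖W v‖) :=
    fun k hk ↦ (hmoment k (mod_cast hk)).1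
  refine ⟨contDiff_fourierInv hmoment_int, fun j hj x ↦ ?_⟩
  have h2π : 1 ≤ 2 * π := by linarith [pi_gt_three]
  calc ‖iteratedFDeriv ℝ j (𝓕⁻ W) x‖
      ≤ (2 * π) ^ j * ∫ v, ‖v‖ ^ j * ‖W v‖ :=
        norm_iteratedFDeriv_fourierInv_le hmoment_int hW.aestronglyMeasurable (mod_cast hj) x
    _ ≤ (2 * π) ^ q * (√(hInt n ((q : ℝ) + n / 2) φ W).toReal * √K.toReal) := by
        gcongr
        exact (hmoment j hj).2
    _ ≤ ((2 * π) ^ q * √K.toReal + 1) * √(hInt n ((q : ℝ) + n / 2) φ W).toReal := by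
        nlinarith [sqrt_nonneg (hInt n ((q : ℝ) + n / 2) φ W).toReal]
end

section
/- Let ψ ∈ 𝓑 be such that ψ(t)/t is bounded near infinity, and define χ(t) := t/ψ(t). If ψ is pseudoconcave in a neighborhood of +∞ (hence an interpolation parameter), then χ is also pseudoconcave in a neighborhood of +∞. -/
/-- The class `𝓑` of interpolation function parameters. -/
def BClass (ψ : ℝ → ℝ) : Prop :=
  Measurable ψ ∧ (∀ t : ℝ, 0 < t → 0 < ψ t) ∧
  (∀ a b : ℝ, 0 < a → a < b → ∃ M : ℝ, ∀ t ∈ Set.Icc a b, ψ t ≤ M) ∧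
  (∀ r : ℝ, 0 < r → ∃ m : ℝ, 0 < m ∧ ∀ t : ℝ, r ≤ t → m ≤ ψ t)

/-- A function is pseudoconcave near `+∞` if it is equivalent there to a positive concave
function. -/
def PseudoconcaveAtTop (ψ : ℝ → ℝ) : Prop :=
  ∃ b : ℝ, 0 < b ∧ ∃ ψ₁ : ℝ → ℝ,
    ConcaveOn ℝ (Set.Ioi b) ψ₁ ∧ (∀ t ∈ Set.Ioi b, 0 < ψ₁ t) ∧
    ∃ C : ℝ, 0 < C ∧ ∀ t ∈ Set.Ioi b, ψ t ≤ C * ψ₁ t ∧ ψ₁ t ≤ C * ψ t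


/-!
A positive concave `ψ₁` on `(b, ∞)` is almost increasing, `ψ₁ u ≤ 2 ψ₁ t`, while `t / ψ₁ t` is
almost increasing too, `u ψ₁ t ≤ 2 t ψ₁ u` (for `2b < u ≤ t`). These two facts show that
`t / ψ₁ t` is within a factor `2` of `χ₁ t = inf_{u > 2b} (u + t) / ψ₁ u`, which is concave as an
infimum of affine functions of `t`. If `ψ` is equivalent to `ψ₁`, then `t / ψ t` is equivalent
to `χ₁`.
-/

open Set

theorem ConcaveOn.sub_mul_add_sub_mul_le {s : Set ℝ} {f : ℝ → ℝ} (hf : ConcaveOn ℝ s f)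
    {x y z : ℝ} (hx : x ∈ s) (hz : z ∈ s) (hxy : x < y) (hyz : y < z) :
    (z - y) * f x + (y - x) * f z ≤ (z - x) * f y := by
  have h := hf.slope_anti_adjacent hx hz hxy hyz
  rw [div_le_div_iff₀ (sub_pos.2 hyz) (sub_pos.2 hxy)] at h
  linarith

section PositiveConcave

variable {f : ℝ → ℝ} {b u t : ℝ} (hf : ConcaveOn ℝ (Ioi b) f) (hpos : ∀ t ∈ Ioi b, 0 < f t)
include hf hpos

theorem ConcaveOn.le_two_mul_of_le (hu : b < u) (hut : u ≤ t) : f u ≤ 2 * f t := by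
  rcases hut.eq_or_lt with rfl | hut
  · linarith [hpos u hu]
  have hz : 2 * t - u ∈ Ioi b := by simp only [mem_Ioi]; linarith
  have h := hf.sub_mul_add_sub_mul_le hu hz hut (by linarith)
  refine le_of_mul_le_mul_left ?_ (sub_pos.2 hut)
  linarith [mul_pos (sub_pos.2 hut) (hpos _ hz)]

theorem ConcaveOn.mul_le_two_mul_mul (hb : 0 ≤ b) (hu : 2 * b < u) (hut : u ≤ t) :
    u * f t ≤ 2 * t * f u := by
  have hu0 : 0 < u := by linarith
  have hfu := mul_pos hu0 (hpos u (by simp only [mem_Ioi]; linarith))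
  rcases hut.eq_or_lt with rfl | hut
  · linarith
  have hx : u / 2 ∈ Ioi b := by simp only [mem_Ioi]; linarith
  have hz : t ∈ Ioi b := by simp only [mem_Ioi]; linarith
  have h := hf.sub_mul_add_sub_mul_le hx hz (by linarith) hut
  nlinarith [mul_pos (sub_pos.2 hut) (hpos _ hx)]

end PositiveConcave

noncomputable def dualConcave (f : ℝ → ℝ) (a t : ℝ) : ℝ :=
  ⨅ u : Ioi a, (u + t) / f u

section DualConcave

variable {f : ℝ → ℝ} {a : ℝ} (hpos : ∀ u ∈ Ioi a, 0 < f u) (ha : 0 ≤ a)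
include hpos ha

theorem bddBelow_range_dualConcave {t : ℝ} (ht : 0 ≤ t) :
    BddBelow (range fun u : Ioi a => (u + t) / f u) := by
  refine ⟨0, ?_⟩
  rintro _ ⟨⟨u, hu⟩, rfl⟩
  exact div_nonneg (by linarith [mem_Ioi.1 hu]) (hpos u hu).le

theorem concaveOn_dualConcave : ConcaveOn ℝ (Ici 0) (dualConcave f a) := by
  refine ⟨convex_Ici 0, fun x hx y hy c d hc hd hcd => le_ciInf fun u => ?_⟩
  have hx' := ciInf_le (bddBelow_range_dualConcave hpos ha hx) u
  have hy' := ciInf_le (bddBelow_range_dualConcave hpos ha hy) u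
  have hfu := hpos u u.2
  calc c • dualConcave f a x + d • dualConcave f a y
      ≤ c * ((u + x) / f u) + d * ((u + y) / f u) := by
        simp only [smul_eq_mul]; gcongr <;> assumption
    _ = (u + (c • x + d • y)) / f u := by
        simp only [smul_eq_mul]; field_simp; linear_combination (u : ℝ) * hcd

theorem dualConcave_le_two_mul {t : ℝ} (ht : a < t) :
    dualConcave f a t ≤ 2 * (t / f t) :=
  (ciInf_le (bddBelow_range_dualConcave hpos ha (ha.trans ht.le)) ⟨t, ht⟩).trans_eq (by ring)

end DualConcave

theorem ConcaveOn.div_le_two_mul_dualConcave {f : ℝ → ℝ} {b t : ℝ} (hf : ConcaveOn ℝ (Ioi b) f)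
    (hpos : ∀ t ∈ Ioi b, 0 < f t) (hb : 0 ≤ b) (ht : 2 * b < t) :
    t / f t ≤ 2 * dualConcave f (2 * b) t := by
  have ht0 : 0 < t := by linarith
  have hft := hpos t (by simp only [mem_Ioi]; linarith)
  rw [← div_le_iff₀' two_pos]
  refine le_ciInf fun ⟨u, hu⟩ => ?_
  have hfu := hpos u (by simp only [mem_Ioi] at hu ⊢; linarith)
  rw [mem_Ioi] at hu
  rw [div_div, div_le_div_iff₀ (by positivity) hfu]
  rcases le_total u t with hut | htu
  · nlinarith [hf.le_two_mul_of_le hpos (by linarith) hut, mul_pos ht0 hft]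
  · nlinarith [hf.mul_le_two_mul_mul hpos hb ht htu]

theorem div_le_mul_div_of_le_mul {a b c t : ℝ} (ht : 0 ≤ t) (ha : 0 < a) (hc : 0 < c)
    (h : a ≤ c * b) : t / b ≤ c * (t / a) := by
  have hb : 0 < b := pos_of_mul_pos_right (ha.trans_le h) hc.le
  rw [mul_div_assoc', div_le_div_iff₀ hb ha]
  nlinarith

theorem dual_parameter_pseudoconcave_general (ψ : ℝ → ℝ)
    (hpc : PseudoconcaveAtTop ψ) :
    PseudoconcaveAtTop (fun t => t / ψ t) := by
  obtain ⟨b, hb, ψ₁, hconc, hpos, C, hC, hequiv⟩ := hpc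
  have hpos' : ∀ u ∈ Ioi (2 * b), 0 < ψ₁ u := fun u hu =>
    hpos u (by simp only [mem_Ioi] at hu ⊢; linarith)
  have hlow (t : ℝ) (ht : t ∈ Ioi (2 * b)) := hconc.div_le_two_mul_dualConcave hpos hb.le ht
  have hupp (t : ℝ) (ht : t ∈ Ioi (2 * b)) := dualConcave_le_two_mul hpos' (by positivity) ht
  refine ⟨2 * b, by positivity, dualConcave ψ₁ (2 * b),
    (concaveOn_dualConcave hpos' (by positivity)).subset (Ioi_subset_Ici (by positivity))
      (convex_Ioi _),
    fun t ht => ?_, 2 * C, by positivity, fun t ht => ?_⟩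
  all_goals have ht0 : 0 < t := by linarith [mem_Ioi.1 ht]
  · linarith [hlow t ht, div_pos ht0 (hpos' t ht)]
  obtain ⟨hψ, hψ₁⟩ := hequiv t (by simp only [mem_Ioi] at ht ⊢; linarith)
  constructor
  · calc t / ψ t ≤ C * (t / ψ₁ t) := div_le_mul_div_of_le_mul ht0.le (hpos' t ht) hC hψ₁
      _ ≤ 2 * C * dualConcave ψ₁ (2 * b) t := by nlinarith [hlow t ht]
  · have hψt : 0 < ψ t := pos_of_mul_pos_right ((hpos' t ht).trans_le hψ₁) hC.le
    calc dualConcave ψ₁ (2 * b) t ≤ 2 * (t / ψ₁ t) := hupp t ht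
      _ ≤ 2 * C * (t / ψ t) := by nlinarith [div_le_mul_div_of_le_mul ht0.le hψt hC hψ]

/-- If `ψ ∈ 𝓑`, `ψ(t)/t` is bounded near infinity and `ψ` is pseudoconcave near `+∞`,
then `χ(t) := t/ψ(t)` is also pseudoconcave near `+∞`. -/
theorem dual_parameter_pseudoconcave (ψ : ℝ → ℝ) (hψ : BClass ψ)
    (hbd : ∃ M b : ℝ, 0 < b ∧ ∀ t : ℝ, b ≤ t → ψ t / t ≤ M)
    (hpc : PseudoconcaveAtTop ψ) :
    PseudoconcaveAtTop (fun t => t / ψ t) :=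
  dual_parameter_pseudoconcave_general ψ hpc
end

section
/- Let q ≥ 0 be an integer, n ≥ 1, and let μ(ξ) := ⟨ξ⟩^{q+n/2} φ(⟨ξ⟩) where φ ∈ 𝓜 is continuous and satisfies ∫₁^∞ dt/(t φ²(t)) < ∞. Then for every multi-index α with |α| ≤ q, the function ξ ↦ ξ^α / μ(ξ) belongs to L²(ℝⁿ); in particular ∫_{ℝⁿ} ⟨ξ⟩^{2q} ⟨ξ⟩^{-2q-n} φ(⟨ξ⟩)^{-2} dξ < ∞. -/
/-!
In polar coordinates the integral of `⟨ξ⟩^{-n} ψ(⟨ξ⟩)` over `ℝⁿ`, with `ψ = φ⁻²`, becomes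
`∫₀^∞ r^{n-1} ⟨r⟩^{-n} ψ(⟨r⟩) dr`. On `(0, 1]` the integrand is bounded because `φ` is bounded
below on `[1, 2]`. For `r ≥ 1` one has `r^{n-1} ⟨r⟩^{-n} ≤ 2 (r/⟨r⟩) / ⟨r⟩`, and `r/⟨r⟩` is the
Jacobian of `t = ⟨r⟩`, so this part is controlled by `∫₁^∞ ψ(t)/t dt < ∞`. Every `|ξ^α|²/μ(ξ)²`
with `|α| ≤ q` is pointwise dominated by `⟨ξ⟩^{-n} ψ(⟨ξ⟩)`, because `|ξ_i| ≤ ⟨ξ⟩`.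
-/

open Filter MeasureTheory ENNReal

open Set Module

lemma one_le_sqrt_one_add_sq (r : ℝ) : 1 ≤ √(1 + r ^ 2) :=
  Real.one_le_sqrt.2 (by nlinarith)

lemma hasDerivAt_sqrt_one_add_sq (r : ℝ) :
    HasDerivAt (fun r => √(1 + r ^ 2)) (r / √(1 + r ^ 2)) r := by
  have h := ((hasDerivAt_pow 2 r).const_add 1).sqrt (by positivity)
  convert h using 1
  ring

lemma injOn_sqrt_one_add_sq : InjOn (fun r : ℝ => √(1 + r ^ 2)) (Ioi 0) := by
  refine (Real.strictMonoOn_sqrt.comp (fun a ha b _ hab => ?_) fun r _ => ?_).injOn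
  · simp only [add_lt_add_iff_left]
    exact pow_lt_pow_left₀ hab (le_of_lt ha) two_ne_zero
  · exact mem_Ici.2 (by positivity)

lemma pow_sub_one_div_sqrt_one_add_sq_pow_le {r : ℝ} (hr : 1 ≤ r) {d : ℕ} (hd : 1 ≤ d) :
    r ^ (d - 1) / √(1 + r ^ 2) ^ d ≤ 2 * (r / √(1 + r ^ 2) / √(1 + r ^ 2)) := by
  set s := √(1 + r ^ 2)
  have hs1 : 1 ≤ s := one_le_sqrt_one_add_sq r
  have hrs : r ≤ s := Real.le_sqrt_of_sq_le (by linarith)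
  have hs2r : s ≤ 2 * r := (Real.sqrt_le_left (by linarith)).2 (by nlinarith)
  obtain ⟨k, rfl⟩ := Nat.exists_eq_add_of_le' hd
  rw [Nat.add_sub_cancel, pow_succ, div_le_iff₀ (by positivity)]
  calc r ^ k ≤ s ^ k := pow_le_pow_left₀ (by linarith) hrs k
    _ ≤ 2 * r / s * s ^ k :=
        le_mul_of_one_le_left (by positivity) ((one_le_div₀ (by positivity)).2 hs2r)
    _ = _ := by field_simp

lemma integrableOn_Ioc_zero_one_radial (d : ℕ) {ψ : ℝ → ℝ} (hψm : Measurable ψ) {C : ℝ}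
    (hψC : ∀ t ∈ Icc 1 2, |ψ t| ≤ C) :
    IntegrableOn (fun r : ℝ => r ^ (d - 1) • (ψ √(1 + r ^ 2) / √(1 + r ^ 2) ^ d)) (Ioc 0 1) := by
  refine IntegrableOn.of_bound measure_Ioc_lt_top (by fun_prop) C ?_
  filter_upwards [ae_restrict_mem measurableSet_Ioc] with r ⟨hr0, hr1⟩
  have hs1 := one_le_sqrt_one_add_sq r
  have hs2 : √(1 + r ^ 2) ≤ 2 := (Real.sqrt_le_left zero_le_two).2 (by nlinarith)
  simp only [smul_eq_mul, Real.norm_eq_abs, abs_mul, abs_div, abs_pow, abs_of_pos hr0,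
    abs_of_pos (lt_of_lt_of_le one_pos hs1)]
  calc r ^ (d - 1) * (|ψ √(1 + r ^ 2)| / √(1 + r ^ 2) ^ d)
      ≤ 1 * (|ψ √(1 + r ^ 2)| / 1) := by
        gcongr
        · exact pow_le_one₀ hr0.le hr1
        · exact one_le_pow₀ hs1
    _ ≤ C := by simpa using hψC _ ⟨hs1, hs2⟩

lemma integrableOn_Ioi_one_radial {d : ℕ} (hd : 1 ≤ d) {ψ : ℝ → ℝ} (hψm : Measurable ψ)
    (hψ : IntegrableOn (fun t => ψ t / t) (Ioi 1)) :
    IntegrableOn (fun r : ℝ => r ^ (d - 1) • (ψ √(1 + r ^ 2) / √(1 + r ^ 2) ^ d)) (Ioi 1) := by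
  have himage : (fun r : ℝ => √(1 + r ^ 2)) '' Ioi 1 ⊆ Ioi 1 := by
    rintro _ ⟨r, hr, rfl⟩
    exact Real.lt_sqrt_of_sq_lt (by simp only [mem_Ioi] at hr; nlinarith)
  have hsubst := (integrableOn_image_iff_integrableOn_abs_deriv_smul measurableSet_Ioi
    (fun r _ => (hasDerivAt_sqrt_one_add_sq r).hasDerivWithinAt)
    (injOn_sqrt_one_add_sq.mono (Ioi_subset_Ioi zero_le_one)) _).1 (hψ.mono_set himage)
  refine (hsubst.norm.const_mul 2).mono' (by fun_prop) ?_
  filter_upwards [ae_restrict_mem measurableSet_Ioi] with r (hr : 1 < r)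
  have hs0 : 0 < √(1 + r ^ 2) := by positivity
  simp only [smul_eq_mul, Real.norm_eq_abs, abs_mul, abs_div, abs_pow,
    abs_of_pos (lt_trans one_pos hr), abs_of_pos hs0]
  calc r ^ (d - 1) * (|ψ √(1 + r ^ 2)| / √(1 + r ^ 2) ^ d)
      = r ^ (d - 1) / √(1 + r ^ 2) ^ d * |ψ √(1 + r ^ 2)| := by ring
    _ ≤ 2 * (r / √(1 + r ^ 2) / √(1 + r ^ 2)) * |ψ √(1 + r ^ 2)| := by
        gcongr
        exact pow_sub_one_div_sqrt_one_add_sq_pow_le hr.le hd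
    _ = _ := by ring

theorem integrable_comp_sqrt_one_add_norm_sq_div_pow_finrank {E : Type*} [NormedAddCommGroup E]
    [NormedSpace ℝ E] [FiniteDimensional ℝ E] [Nontrivial E] [MeasurableSpace E] [BorelSpace E]
    (μ : Measure E) [μ.IsAddHaarMeasure] {ψ : ℝ → ℝ} (hψm : Measurable ψ) {C : ℝ}
    (hψC : ∀ t ∈ Icc 1 2, |ψ t| ≤ C) (hψ : IntegrableOn (fun t => ψ t / t) (Ioi 1)) :
    Integrable (fun x : E => ψ √(1 + ‖x‖ ^ 2) / √(1 + ‖x‖ ^ 2) ^ finrank ℝ E) μ := by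
  rw [integrable_fun_norm_addHaar μ (f := fun r => ψ √(1 + r ^ 2) / √(1 + r ^ 2) ^ finrank ℝ E),
    ← Ioc_union_Ioi_eq_Ioi zero_le_one]
  exact (integrableOn_Ioc_zero_one_radial _ hψm hψC).union
    (integrableOn_Ioi_one_radial finrank_pos hψm hψ)

lemma abs_prod_pow_le_pow {ι : Type*} [Fintype ι] {x : ι → ℝ} {s : ℝ} (hs : 1 ≤ s)
    (hx : ∀ i, |x i| ≤ s) {α : ι → ℕ} {q : ℕ} (hα : ∑ i, α i ≤ q) :
    |∏ i, x i ^ α i| ≤ s ^ q :=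
  calc |∏ i, x i ^ α i| = ∏ i, |x i| ^ α i := by simp only [Finset.abs_prod, abs_pow]
    _ ≤ ∏ i, s ^ α i := by gcongr with i; exact hx i
    _ = s ^ ∑ i, α i := Finset.prod_pow_eq_pow_sum _ _ _
    _ ≤ s ^ q := pow_le_pow_right₀ hs hα

lemma rpow_add_half_sq {s : ℝ} (hs : 0 ≤ s) (q n : ℕ) :
    (s ^ ((q : ℝ) + n / 2)) ^ 2 = (s ^ q) ^ 2 * s ^ n := by
  rw [← Real.rpow_natCast _ 2, ← Real.rpow_mul hs,
    show ((q : ℝ) + n / 2) * (2 : ℕ) = ((2 * q + n : ℕ) : ℝ) by push_cast; ring, Real.rpow_natCast]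
  ring

lemma rpow_neg_half_eq_inv_sqrt_pow {a : ℝ} (ha : 0 ≤ a) (n : ℕ) :
    a ^ (-(n / 2 : ℝ)) = (√a ^ n)⁻¹ := by
  rw [Real.rpow_neg ha, Real.sqrt_eq_rpow, ← Real.rpow_natCast, ← Real.rpow_mul ha]
  ring_nf

lemma sq_div_rpow_add_half_mul_le {P s c : ℝ} (hs : 1 ≤ s) {q : ℕ} (hP : |P| ≤ s ^ q) (n : ℕ) :
    (P / (s ^ ((q : ℝ) + n / 2) * c)) ^ 2 ≤ (c ^ 2)⁻¹ / s ^ n := by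
  have hs0 : 0 < s := lt_of_lt_of_le one_pos hs
  rw [div_pow, mul_pow, rpow_add_half_sq hs0.le,
    show P ^ 2 / ((s ^ q) ^ 2 * s ^ n * c ^ 2) = P ^ 2 / (s ^ q) ^ 2 * ((c ^ 2)⁻¹ / s ^ n) by
      field_simp]
  refine mul_le_of_le_one_left (by positivity) (div_le_one_of_le₀ ?_ (by positivity))
  exact sq_le_sq.2 (hP.trans (le_abs_self _))

lemma sq_monomial_div_le {ι : Type*} [Fintype ι] (ξ : EuclideanSpace ℝ ι) {α : ι → ℕ} {q : ℕ}
    (hα : ∑ i, α i ≤ q) (n : ℕ) (c : ℝ) :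
    ((∏ i, ξ i ^ α i) / (√(1 + ‖ξ‖ ^ 2) ^ ((q : ℝ) + n / 2) * c)) ^ 2
      ≤ (c ^ 2)⁻¹ / √(1 + ‖ξ‖ ^ 2) ^ n := by
  have hs := one_le_sqrt_one_add_sq ‖ξ‖
  have hξ : ∀ i, |ξ i| ≤ √(1 + ‖ξ‖ ^ 2) := fun i =>
    (PiLp.norm_apply_le ξ i).trans (Real.le_sqrt_of_sq_le (by linarith))
  exact sq_div_rpow_add_half_mul_le hs (abs_prod_pow_le_pow hs hξ hα) n

lemma MClass.exists_abs_inv_sq_le {φ : ℝ → ℝ} (hφ : MClass φ) :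
    ∃ C, ∀ t ∈ Icc 1 2, |((φ t) ^ 2)⁻¹| ≤ C := by
  obtain ⟨C, hC0, hC⟩ := hφ.2.2.1 2 one_lt_two
  refine ⟨C ^ 2, fun t ht => ?_⟩
  have hφC := (hC t ht).2
  have hφ0 : 0 < φ t := (inv_pos.2 hC0).trans_le hφC
  rw [abs_of_nonneg (by positivity), ← inv_pow]
  exact pow_le_pow_left₀ (by positivity) (inv_le_of_inv_le₀ hC0 hφC) 2

lemma integrableOn_inv_sq_div_Ioi_one {φ : ℝ → ℝ} (hφm : Measurable φ)
    (hint : (∫⁻ t in Ioi (1:ℝ), ENNReal.ofReal (1 / (t * (φ t) ^ 2))) < ⊤) :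
    IntegrableOn (fun t => ((φ t) ^ 2)⁻¹ / t) (Ioi 1) := by
  refine ⟨(by fun_prop : Measurable _).aestronglyMeasurable,
    (hasFiniteIntegral_iff_ofReal ?_).2 ?_⟩
  · filter_upwards [ae_restrict_mem measurableSet_Ioi] with t (ht : 1 < t)
    have := lt_trans one_pos ht
    positivity
  · convert hint using 4 with t
    ring

theorem key_integrability_general (n : ℕ) (hn : 1 ≤ n) (q : ℕ)
    (φ : ℝ → ℝ) (hφ : MClass φ)
    (hint : (∫⁻ t in Set.Ioi (1:ℝ), ENNReal.ofReal (1 / (t * (φ t) ^ 2))) < ⊤) :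
    (∀ α : Fin n → ℕ, (∑ i, α i) ≤ q →
      MemLp
        (fun ξ : EuclideanSpace ℝ (Fin n) =>
          (∏ i, ξ i ^ α i) /
            (Real.sqrt (1 + ‖ξ‖ ^ 2) ^ ((q : ℝ) + n / 2) *
              φ (Real.sqrt (1 + ‖ξ‖ ^ 2))))
        2 volume) ∧
    (∫⁻ ξ : EuclideanSpace ℝ (Fin n),
      ENNReal.ofReal ((1 + ‖ξ‖ ^ 2) ^ (q : ℝ) * (1 + ‖ξ‖ ^ 2) ^ (-(q : ℝ) - n / 2) *
        ((φ (Real.sqrt (1 + ‖ξ‖ ^ 2))) ^ 2)⁻¹)) < ⊤ := by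
  have hφm : Measurable φ := hφ.1
  have : Nontrivial (EuclideanSpace ℝ (Fin n)) :=
    Module.nontrivial_of_finrank_pos (R := ℝ) (by rw [finrank_euclideanSpace_fin]; omega)
  obtain ⟨C, hC⟩ := hφ.exists_abs_inv_sq_le
  have hkey := integrable_comp_sqrt_one_add_norm_sq_div_pow_finrank
    (volume : Measure (EuclideanSpace ℝ (Fin n))) (ψ := fun t => ((φ t) ^ 2)⁻¹)
    (by fun_prop) hC (integrableOn_inv_sq_div_Ioi_one hφm hint)
  rw [finrank_euclideanSpace_fin] at hkey
  refine ⟨fun α hα => ?_, ?_⟩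
  · have hmeas : Measurable fun ξ : EuclideanSpace ℝ (Fin n) =>
            (∏ i, ξ i ^ α i) / (√(1 + ‖ξ‖ ^ 2) ^ ((q : ℝ) + n / 2) * φ √(1 + ‖ξ‖ ^ 2)) := by
      fun_prop
    refine (memLp_two_iff_integrable_sq hmeas.aestronglyMeasurable).2
      (hkey.mono' (hmeas.pow_const 2).aestronglyMeasurable (ae_of_all _ fun ξ => ?_))
    rw [Real.norm_of_nonneg (sq_nonneg _)]
    exact sq_monomial_div_le ξ hα n _
  · refine lt_of_eq_of_lt (lintegral_congr fun ξ => ?_) hkey.lintegral_lt_top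
    rw [← Real.rpow_add (by positivity), show (q : ℝ) + (-(q : ℝ) - n / 2) = -(n / 2 : ℝ) by ring,
      rpow_neg_half_eq_inv_sqrt_pow (by positivity), div_eq_inv_mul]

/-- The key integrability computation behind the embedding
`H^{q+n/2,φ}(ℝⁿ) ↪ C^q_b(ℝⁿ)`: with `μ(ξ) = ⟨ξ⟩^{q+n/2}φ(⟨ξ⟩)` and
`∫₁^∞ dt/(tφ²(t)) < ∞`, the function `ξ ↦ ξ^α/μ(ξ)` is in `L²(ℝⁿ)` for every multi-index
`|α| ≤ q`; in particular `∫ ⟨ξ⟩^{2q}⟨ξ⟩^{-2q-n}φ(⟨ξ⟩)^{-2} dξ < ∞`. -/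
theorem key_integrability (n : ℕ) (hn : 1 ≤ n) (q : ℕ)
    (φ : ℝ → ℝ) (hφ : MClass φ) (hcont : ContinuousOn φ (Set.Ici (1:ℝ)))
    (hint : (∫⁻ t in Set.Ioi (1:ℝ), ENNReal.ofReal (1 / (t * (φ t) ^ 2))) < ⊤) :
    (∀ α : Fin n → ℕ, (∑ i, α i) ≤ q →
      MemLp
        (fun ξ : EuclideanSpace ℝ (Fin n) =>
          (∏ i, ξ i ^ α i) /
            (Real.sqrt (1 + ‖ξ‖ ^ 2) ^ ((q : ℝ) + n / 2) *
              φ (Real.sqrt (1 + ‖ξ‖ ^ 2))))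
        2 volume) ∧
    (∫⁻ ξ : EuclideanSpace ℝ (Fin n),
      ENNReal.ofReal ((1 + ‖ξ‖ ^ 2) ^ (q : ℝ) * (1 + ‖ξ‖ ^ 2) ^ (-(q : ℝ) - n / 2) *
        ((φ (Real.sqrt (1 + ‖ξ‖ ^ 2))) ^ 2)⁻¹)) < ⊤ :=
  key_integrability_general n hn q φ hφ hint
end
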